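/- arXiv:1204.5109 — 3 statements merged into one kernel-verified Lean document; each statement's English description precedes it below -/
import Mathlib

section
/- For all θ ∈ (0, π), sin(θ) · |log(tan(θ/2))| ≤ 1. -/
/-!
By the half-angle substitution `t = tan (θ / 2) > 0` we have `sin θ = 2t / (1 + t²)`, so the claim
is `2t |log t| ≤ 1 + t²`. This inequality is invariant under `t ↦ t⁻¹` (the reflection
`θ ↦ π - θ`), so we may take `t ≤ 1`, where `2t |log t| = 2 negMulLog t ≤ 2 / e < 1`.
-/

open Real

namespace Real

lemma negMulLog_le_exp_neg_one {x : ℝ} (hx : 0 ≤ x) : negMulLog x ≤ exp (-1) := by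
  rcases hx.eq_or_lt with rfl | hx
  · simp [(exp_pos _).le]
  -- `log y ≤ y - 1` at `y = (e x)⁻¹`, which is tight at the maximiser `x = e⁻¹`
  have key := log_le_sub_one_of_pos (inv_pos.mpr (mul_pos (exp_pos 1) hx))
  rw [log_inv, log_mul (exp_pos 1).ne' hx.ne', log_exp, mul_inv, ← exp_neg] at key
  have : -log x ≤ exp (-1) * x⁻¹ := by linarith
  calc negMulLog x = x * -log x := by rw [negMulLog]; ring
    _ ≤ x * (exp (-1) * x⁻¹) := by gcongr
    _ = exp (-1) := by field_simp

lemma two_mul_mul_abs_log_le_one {t : ℝ} (ht₀ : 0 ≤ t) (ht₁ : t ≤ 1) :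
    2 * t * |log t| ≤ 1 := by
  have he : 2 * exp (-1) < 1 := by
    rw [exp_neg, ← div_eq_mul_inv, div_lt_one (exp_pos 1)]
    linarith [exp_one_gt_d9]
  have := negMulLog_le_exp_neg_one ht₀
  rw [abs_of_nonpos (log_nonpos ht₀ ht₁), negMulLog] at *
  linarith

lemma two_mul_mul_abs_log_le_one_add_sq {t : ℝ} (ht : 0 < t) :
    2 * t * |log t| ≤ 1 + t ^ 2 := by
  rcases le_total t 1 with ht₁ | ht₁
  · nlinarith [two_mul_mul_abs_log_le_one ht.le ht₁]
  · have h := two_mul_mul_abs_log_le_one (inv_nonneg.mpr ht.le) (inv_le_one_of_one_le₀ ht₁)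
    rw [log_inv, abs_neg] at h
    calc 2 * t * |log t| = t ^ 2 * (2 * t⁻¹ * |log t|) := by field_simp
      _ ≤ t ^ 2 * 1 := by gcongr
      _ ≤ 1 + t ^ 2 := by linarith

end Real

/-- For all `θ ∈ (0, π)`, `sin θ · |log (tan (θ/2))| ≤ 1`. -/
theorem sin_mul_abs_log_tan_half_le_one (θ : ℝ) (h0 : 0 < θ) (hπ : θ < Real.pi) :
    Real.sin θ * |Real.log (Real.tan (θ / 2))| ≤ 1 := by
  have ht : 0 < tan (θ / 2) := tan_pos_of_pos_of_lt_pi_div_two (by linarith) (by linarith)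
  rw [sin_eq_two_mul_tan_half_div_one_add_tan_half_sq, div_mul_eq_mul_div,
    div_le_one (by positivity)]
  exact two_mul_mul_abs_log_le_one_add_sq ht
end

section
/- There exists an absolute constant C > 0 such that for every continuously differentiable real-valued function f on [0, π], ∫_0^π f(θ)² dθ ≤ C · [ ∫_0^π f(θ)² sin θ dθ + (∫_0^π f(θ)² sin θ dθ)^{1/2} · (∫_0^π f'(θ)² sin θ dθ)^{1/2} ]. -/
/-!
Since `(f² sin θ cos θ)' = 2 f f' sin θ cos θ + f² (cos² θ - sin² θ)` and `sin θ cos θ` vanishes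
at `0` and `π`, integrating `f² = f² sin² + f² cos²` by parts gives
`∫ f² = 2 ∫ f² sin² - 2 ∫ (f cos) f' sin`. The first integral is at most `∫ f² sin` because
`sin ≤ 1`, and Cauchy–Schwarz for the weight `sin` bounds the second by
`(∫ f² sin)^{1/2} (∫ f'² sin)^{1/2}`; so `C = 2` works.
-/

open MeasureTheory intervalIntegral Set Real

theorem abs_integral_mul_le_sqrt_mul_sqrt {α : Type*} [MeasurableSpace α] {μ : Measure α}
    {f g : α → ℝ} (hf : MemLp f 2 μ) (hg : MemLp g 2 μ) :
    |∫ a, f a * g a ∂μ| ≤ √(∫ a, f a ^ 2 ∂μ) * √(∫ a, g a ^ 2 ∂μ) := by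
  have h2 : ENNReal.ofReal 2 = 2 := by norm_num
  have holder := integral_mul_norm_le_Lp_mul_Lq Real.HolderConjugate.two_two (h2 ▸ hf) (h2 ▸ hg)
  simp only [norm_eq_abs, ← abs_mul, rpow_two, sq_abs, ← sqrt_eq_rpow] at holder
  exact MeasureTheory.abs_integral_le_integral_abs.trans holder

theorem abs_integral_mul_mul_le_sqrt_mul_sqrt {α : Type*} [MeasurableSpace α] {μ : Measure α}
    {f g w : α → ℝ} (hf : AEStronglyMeasurable f μ) (hg : AEStronglyMeasurable g μ)
    (hw : AEStronglyMeasurable w μ) (hw_nonneg : 0 ≤ᵐ[μ] w)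
    (hfw : Integrable (fun a ↦ f a ^ 2 * w a) μ) (hgw : Integrable (fun a ↦ g a ^ 2 * w a) μ) :
    |∫ a, f a * g a * w a ∂μ| ≤ √(∫ a, f a ^ 2 * w a ∂μ) * √(∫ a, g a ^ 2 * w a ∂μ) := by
  have hsqrt : AEStronglyMeasurable (fun a ↦ √(w a)) μ :=
    continuous_sqrt.comp_aestronglyMeasurable hw
  have sq_mul_sqrt : ∀ {h : α → ℝ},
      (fun a ↦ (h a * √(w a)) ^ 2) =ᵐ[μ] fun a ↦ h a ^ 2 * w a := by
    intro h
    filter_upwards [hw_nonneg] with a ha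
    rw [mul_pow, sq_sqrt ha]
  have hmem : ∀ {h : α → ℝ}, AEStronglyMeasurable h μ → Integrable (fun a ↦ h a ^ 2 * w a) μ →
      MemLp (fun a ↦ h a * √(w a)) 2 μ := fun h hhw ↦
    (memLp_two_iff_integrable_sq (h.mul hsqrt)).2 (hhw.congr sq_mul_sqrt.symm)
  have hprod : (fun a ↦ f a * √(w a) * (g a * √(w a))) =ᵐ[μ] fun a ↦ f a * g a * w a := by
    filter_upwards [hw_nonneg] with a ha
    rw [mul_mul_mul_comm, mul_self_sqrt ha]
  have := abs_integral_mul_le_sqrt_mul_sqrt (hmem hf hfw) (hmem hg hgw)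
  rwa [integral_congr_ae hprod, integral_congr_ae sq_mul_sqrt,
    integral_congr_ae sq_mul_sqrt] at this

theorem abs_intervalIntegral_mul_mul_le_sqrt_mul_sqrt {f g w : ℝ → ℝ} {a b : ℝ} (hab : a ≤ b)
    (hf : ContinuousOn f (Icc a b)) (hg : ContinuousOn g (Icc a b)) (hw : ContinuousOn w (Icc a b))
    (hw_nonneg : ∀ x ∈ Icc a b, 0 ≤ w x) :
    |∫ x in a..b, f x * g x * w x|
      ≤ √(∫ x in a..b, f x ^ 2 * w x) * √(∫ x in a..b, g x ^ 2 * w x) := by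
  have hmeas : ∀ {h : ℝ → ℝ}, ContinuousOn h (Icc a b) →
      AEStronglyMeasurable h (volume.restrict (Ioc a b)) := fun h ↦
    (h.mono Ioc_subset_Icc_self).aestronglyMeasurable measurableSet_Ioc
  have hint : ∀ {h : ℝ → ℝ}, ContinuousOn h (Icc a b) →
      Integrable (fun x ↦ h x ^ 2 * w x) (volume.restrict (Ioc a b)) := fun h ↦
    ((h.pow 2).mul hw).integrableOn_Icc.mono_set Ioc_subset_Icc_self
  simp only [integral_of_le hab]
  refine abs_integral_mul_mul_le_sqrt_mul_sqrt (hmeas hf) (hmeas hg) (hmeas hw) ?_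
    (hint hf) (hint hg)
  filter_upwards [ae_restrict_mem measurableSet_Ioc] with x hx
  exact hw_nonneg x (Ioc_subset_Icc_self hx)

theorem ae_deriv_eq_derivWithin_Icc (f : ℝ → ℝ) {a b : ℝ} (hab : a ≤ b) :
    ∀ᵐ x, x ∈ uIoc a b → deriv f x = derivWithin f (Icc a b) x := by
  rw [uIoc_of_le hab, ← ae_restrict_iff' measurableSet_Ioc,
    ← Measure.restrict_congr_set Ioo_ae_eq_Ioc, ae_restrict_iff' measurableSet_Ioo]
  exact Filter.Eventually.of_forall fun x hx ↦
    (derivWithin_of_mem_nhds (Icc_mem_nhds hx.1 hx.2)).symm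

theorem DifferentiableOn.hasDerivAt_derivWithin_Icc {f : ℝ → ℝ} {a b x : ℝ}
    (hf : DifferentiableOn ℝ f (Icc a b)) (hx : x ∈ Ioo a b) :
    HasDerivAt f (derivWithin f (Icc a b) x) x := by
  have hnhds := Icc_mem_nhds hx.1 hx.2
  rw [derivWithin_of_mem_nhds hnhds]
  exact ((hf x (Ioo_subset_Icc_self hx)).differentiableAt hnhds).hasDerivAt

theorem integral_sq_eq_of_hasDerivAt {f f' : ℝ → ℝ} (hf : ContinuousOn f (Icc 0 π))
    (hf' : ContinuousOn f' (Icc 0 π)) (hderiv : ∀ x ∈ Ioo 0 π, HasDerivAt f (f' x) x) :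
    ∫ x in 0..π, f x ^ 2
      = 2 * (∫ x in 0..π, f x ^ 2 * sin x ^ 2) - 2 * ∫ x in 0..π, f x * cos x * f' x * sin x := by
  have hint : ∀ {h : ℝ → ℝ}, ContinuousOn h (Icc 0 π) → IntervalIntegrable h volume 0 π :=
    fun h ↦ h.intervalIntegrable_of_Icc pi_pos.le
  have hparts : ∫ x in 0..π,
      (2 * f x * f' x * (sin x * cos x) + f x ^ 2 * (cos x ^ 2 - sin x ^ 2)) = 0 := by
    rw [integral_eq_sub_of_hasDerivAt_of_le (f := fun x ↦ f x ^ 2 * (sin x * cos x)) pi_pos.le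
      ((hf.pow 2).mul (continuousOn_sin.mul continuousOn_cos)) (fun x hx ↦ ?_)
      (hint (by fun_prop))]
    · simp
    · exact (((hderiv x hx).fun_pow 2).fun_mul
        ((hasDerivAt_sin x).fun_mul (hasDerivAt_cos x))).congr_deriv (by push_cast; ring)
  calc ∫ x in 0..π, f x ^ 2
      = ∫ x in 0..π, (2 * (f x ^ 2 * sin x ^ 2) - 2 * (f x * cos x * f' x * sin x)
          + (2 * f x * f' x * (sin x * cos x) + f x ^ 2 * (cos x ^ 2 - sin x ^ 2))) :=
        integral_congr fun x _ ↦ by linear_combination (-f x ^ 2) * sin_sq_add_cos_sq x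
    _ = _ := by
        rw [integral_add (by apply hint; fun_prop) (hint (by fun_prop)), hparts, add_zero,
          integral_sub ((hint (by fun_prop)).const_mul 2) ((hint (by fun_prop)).const_mul 2),
          intervalIntegral.integral_const_mul, intervalIntegral.integral_const_mul]

theorem intervalIntegral_mul_le_of_le_one {F h : ℝ → ℝ} {a b : ℝ} (hab : a ≤ b)
    (hF : ContinuousOn F (Icc a b)) (hh : ContinuousOn h (Icc a b))
    (hF_nonneg : ∀ x ∈ Icc a b, 0 ≤ F x) (hh_le : ∀ x ∈ Icc a b, h x ≤ 1) :
    ∫ x in a..b, F x * h x ≤ ∫ x in a..b, F x :=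
  integral_mono_on hab ((hF.mul hh).intervalIntegrable_of_Icc hab)
    (hF.intervalIntegrable_of_Icc hab)
    fun x hx ↦ mul_le_of_le_one_right (hF_nonneg x hx) (hh_le x hx)

/-- Weighted trace-type inequality: there is an absolute constant `C > 0` such that for
every `C¹` function `f` on `[0, π]`,
`∫_0^π f² ≤ C [ ∫_0^π f² sin + (∫_0^π f² sin)^{1/2} (∫_0^π f'² sin)^{1/2} ]`. -/
theorem weighted_trace_inequality :
    ∃ C : ℝ, 0 < C ∧ ∀ f : ℝ → ℝ,
      ContDiffOn ℝ 1 f (Set.Icc 0 Real.pi) →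
      (∫ θ in (0 : ℝ)..Real.pi, f θ ^ 2)
        ≤ C * ((∫ θ in (0 : ℝ)..Real.pi, f θ ^ 2 * Real.sin θ)
          + Real.sqrt (∫ θ in (0 : ℝ)..Real.pi, f θ ^ 2 * Real.sin θ)
            * Real.sqrt (∫ θ in (0 : ℝ)..Real.pi, (deriv f θ) ^ 2 * Real.sin θ)) := by
  refine ⟨2, two_pos, fun f hf ↦ ?_⟩
  set f' := derivWithin f (Icc 0 π)
  have hfc : ContinuousOn f (Icc 0 π) := hf.continuousOn
  have hf'c : ContinuousOn f' (Icc 0 π) :=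
    hf.continuousOn_derivWithin (uniqueDiffOn_Icc pi_pos) le_rfl
  have hderiv : ∀ x ∈ Ioo 0 π, HasDerivAt f (f' x) x := fun _ ↦
    (hf.differentiableOn one_ne_zero).hasDerivAt_derivWithin_Icc
  have hsin_nonneg : ∀ x ∈ Icc 0 π, 0 ≤ sin x := fun x hx ↦
    sin_nonneg_of_nonneg_of_le_pi hx.1 hx.2
  have hf2sin : ∀ x ∈ Icc 0 π, 0 ≤ f x ^ 2 * sin x := fun x hx ↦
    mul_nonneg (sq_nonneg _) (hsin_nonneg x hx)
  have hsin_sq : ∫ x in 0..π, f x ^ 2 * sin x ^ 2 ≤ ∫ x in 0..π, f x ^ 2 * sin x := by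
    simpa only [mul_assoc, ← sq] using
      intervalIntegral_mul_le_of_le_one (F := fun x ↦ f x ^ 2 * sin x) pi_pos.le
        ((hfc.pow 2).mul continuousOn_sin) continuousOn_sin hf2sin fun x _ ↦ sin_le_one x
  have hcos_sq : ∫ x in 0..π, (f x * cos x) ^ 2 * sin x ≤ ∫ x in 0..π, f x ^ 2 * sin x :=
    calc ∫ x in 0..π, (f x * cos x) ^ 2 * sin x = ∫ x in 0..π, f x ^ 2 * sin x * cos x ^ 2 :=
          integral_congr fun x _ ↦ by ring
      _ ≤ _ := intervalIntegral_mul_le_of_le_one (F := fun x ↦ f x ^ 2 * sin x) pi_pos.le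
          ((hfc.pow 2).mul continuousOn_sin) (continuousOn_cos.pow 2) hf2sin
          fun x _ ↦ cos_sq_le_one x
  have hcauchy := abs_intervalIntegral_mul_mul_le_sqrt_mul_sqrt (f := fun x ↦ f x * cos x)
    pi_pos.le (hfc.mul continuousOn_cos) hf'c continuousOn_sin hsin_nonneg
  have hderiv_eq : ∫ x in 0..π, deriv f x ^ 2 * sin x = ∫ x in 0..π, f' x ^ 2 * sin x :=
    integral_congr_ae <| (ae_deriv_eq_derivWithin_Icc f pi_pos.le).mono fun x hx hx' ↦ by
      rw [hx hx']
  rw [integral_sq_eq_of_hasDerivAt hfc hf'c hderiv, hderiv_eq]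
  have := mul_le_mul_of_nonneg_right (sqrt_le_sqrt hcos_sq)
    (sqrt_nonneg (∫ x in 0..π, f' x ^ 2 * sin x))
  linarith [neg_abs_le (∫ x in 0..π, f x * cos x * f' x * sin x)]
end

section
/- Let N ≥ 2 and let f ∈ C¹([0, π], ℝ) satisfy f(0) = f(π) = 0. Then ∫_0^π f(θ)² / sin³(θ) dθ ≤ 3 ∫_0^π f(θ)² / sin(θ) dθ + 2 ∫_0^π f'(θ)² / sin(θ) dθ, provided all three integrals are finite. -/
/-!
Write `1 / sin³ = 1 / sin + cos² / sin³` and let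
`G θ = -cos θ / (2 sin² θ) - log (tan (θ / 2)) / 2`, an antiderivative of `cos² / sin³`.
Since `sin θ * |log (tan (θ / 2))| = |x| / cosh x ≤ 1` for `x = log (tan (θ / 2))`, we get
`|G| ≤ (|cos| + sin) / (2 sin²)`, and `2ab ≤ a² + b²` turns this into
`|2 f f' G| ≤ f² / (2 sin³) + f'² / sin`. With `Φ = f² G` we have
`Φ' = 2 f f' G + f² cos² / sin³`, hence pointwise `f² / sin³ ≤ 2 Φ' + 2 f² / sin + 2 f'² / sin`.

It remains to see that `∫ Φ' = 0`, i.e. that `Φ = O((f / sin)²)` vanishes at both ends.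
Near `0`, `f / sin → f'(0)`, and `f'(0) ≠ 0` would make `f² / sin³` comparable to `1 / θ`,
which is not integrable; the end `π` follows by reflection.
-/

open Real Set Filter Topology MeasureTheory

theorem abs_le_cosh (x : ℝ) : |x| ≤ cosh x :=
  calc |x| ≤ sinh |x| := self_le_sinh_iff.mpr (abs_nonneg x)
    _ ≤ cosh |x| := (sinh_lt_cosh _).le
    _ = cosh x := cosh_abs x

theorem two_mul_abs_mul_abs_log_le_one_add_sq (x : ℝ) : 2 * |x| * |log x| ≤ 1 + x ^ 2 := by
  rcases eq_or_ne x 0 with rfl | hx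
  · simp
  have hpos : 0 < |x| := abs_pos.mpr hx
  have hcosh : cosh (log x) = (|x| + |x|⁻¹) / 2 := by
    rw [← log_abs, cosh_eq, exp_neg, exp_log hpos]
  have h := abs_le_cosh (log x)
  rw [hcosh] at h
  have : |x| * |x|⁻¹ = 1 := mul_inv_cancel₀ hpos.ne'
  nlinarith [sq_abs x]

theorem sin_mul_abs_log_tan_half_le_one_s5 (θ : ℝ) : sin θ * |log (tan (θ / 2))| ≤ 1 := by
  set t := tan (θ / 2)
  have hsin : |sin θ| = 2 * |t| / (1 + t ^ 2) := by
    rw [sin_eq_two_mul_tan_half_div_one_add_tan_half_sq, abs_div, abs_mul, abs_two,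
      abs_of_pos (by positivity : (0:ℝ) < 1 + t ^ 2)]
  calc sin θ * |log t| ≤ |sin θ| * |log t| := by gcongr; exact le_abs_self _
    _ = 2 * |t| * |log t| / (1 + t ^ 2) := by rw [hsin]; ring
    _ ≤ 1 := div_le_one_of_le₀ (two_mul_abs_mul_abs_log_le_one_add_sq t) (by positivity)

theorem hasDerivAt_log_tan_half {θ : ℝ} (h : sin θ ≠ 0) :
    HasDerivAt (fun x => log (tan (x / 2))) (1 / sin θ) θ := by
  have hsin : sin θ = 2 * sin (θ / 2) * cos (θ / 2) := by
    rw [← sin_two_mul]; ring_nf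
  have hs : sin (θ / 2) ≠ 0 := fun h' => h (by rw [hsin, h']; ring)
  have hc : cos (θ / 2) ≠ 0 := fun h' => h (by rw [hsin, h']; ring)
  have htan : HasDerivAt (fun x => tan (x / 2)) (1 / cos (θ / 2) ^ 2 * (1 / 2)) θ :=
    (hasDerivAt_tan hc).comp (h₂ := tan) θ ((hasDerivAt_id' θ).div_const 2)
  convert htan.log (by rw [tan_eq_sin_div_cos]; exact div_ne_zero hs hc) using 1
  rw [tan_eq_sin_div_cos, hsin]
  field_simp

noncomputable def cosSqDivSinCubeAntideriv (θ : ℝ) : ℝ :=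
  -cos θ / (2 * sin θ ^ 2) - log (tan (θ / 2)) / 2

theorem hasDerivAt_cosSqDivSinCubeAntideriv {θ : ℝ} (h : sin θ ≠ 0) :
    HasDerivAt cosSqDivSinCubeAntideriv (1 / sin θ ^ 3 - 1 / sin θ) θ := by
  have hquot := (hasDerivAt_cos θ).fun_neg.fun_div (((hasDerivAt_sin θ).fun_pow 2).const_mul 2)
    (by simpa using h)
  refine (hquot.fun_sub ((hasDerivAt_log_tan_half h).div_const 2)).congr_deriv ?_
  norm_num
  field_simp
  linear_combination 2 * cos_sq_add_sin_sq θ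

theorem abs_cosSqDivSinCubeAntideriv_le {θ : ℝ} (h : 0 < sin θ) :
    |cosSqDivSinCubeAntideriv θ| ≤ (|cos θ| + sin θ) / (2 * sin θ ^ 2) := by
  have hlog : |log (tan (θ / 2))| ≤ 1 / sin θ := by
    rw [le_div_iff₀ h, mul_comm]; exact sin_mul_abs_log_tan_half_le_one_s5 θ
  calc |cosSqDivSinCubeAntideriv θ|
      ≤ |-cos θ / (2 * sin θ ^ 2)| + |log (tan (θ / 2)) / 2| := abs_sub _ _
    _ = |cos θ| / (2 * sin θ ^ 2) + |log (tan (θ / 2))| / 2 := by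
      rw [abs_div, abs_div, abs_neg, abs_two, abs_of_pos (by positivity : 0 < 2 * sin θ ^ 2)]
    _ ≤ |cos θ| / (2 * sin θ ^ 2) + 1 / sin θ / 2 := by gcongr
    _ = (|cos θ| + sin θ) / (2 * sin θ ^ 2) := by field_simp

theorem abs_two_mul_mul_mul_cosSqDivSinCubeAntideriv_le {θ : ℝ} (h : 0 < sin θ) (u v : ℝ) :
    |2 * u * v * cosSqDivSinCubeAntideriv θ| ≤ u ^ 2 / sin θ ^ 3 / 2 + v ^ 2 / sin θ := by
  set s := sin θ
  have hc : |cos θ| ^ 2 + s ^ 2 = 1 := by rw [sq_abs]; exact cos_sq_add_sin_sq θ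
  calc |2 * u * v * cosSqDivSinCubeAntideriv θ|
      = 2 * |u| * |v| * |cosSqDivSinCubeAntideriv θ| := by simp only [abs_mul, abs_two]
    _ ≤ 2 * |u| * |v| * ((|cos θ| + s) / (2 * s ^ 2)) := by
      gcongr; exact abs_cosSqDivSinCubeAntideriv_le h
    _ = 2 * |u| * |v| * (|cos θ| + s) * s / (2 * s ^ 3) := by field_simp
    _ ≤ (|u| ^ 2 + 2 * |v| ^ 2 * s ^ 2) / (2 * s ^ 3) := by
      gcongr
      nlinarith [sq_nonneg (|u| * |cos θ| - |v| * s), sq_nonneg ((|u| - |v|) * s)]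
    _ = u ^ 2 / s ^ 3 / 2 + v ^ 2 / s := by rw [sq_abs, sq_abs]; field_simp

theorem tendsto_div_sin_of_hasDerivWithinAt {f : ℝ → ℝ} {L : ℝ} (hf0 : f 0 = 0)
    (hf : HasDerivWithinAt f L (Ioi 0) 0) :
    Tendsto (fun x => f x / sin x) (𝓝[>] 0) (𝓝 L) := by
  have hslope_f := (hasDerivWithinAt_iff_tendsto_slope' (lt_irrefl 0)).mp hf
  have hslope_sin := (hasDerivWithinAt_iff_tendsto_slope' (lt_irrefl 0)).mp
    ((hasDerivAt_sin 0).hasDerivWithinAt (s := Ioi 0))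
  rw [cos_zero] at hslope_sin
  refine (div_one L ▸ hslope_f.div hslope_sin one_ne_zero).congr' ?_
  filter_upwards [self_mem_nhdsWithin] with x hx
  simp only [Pi.div_apply, slope_def_field, hf0, sin_zero, sub_zero]
  field_simp [(mem_Ioi.mp hx).ne']

theorem eq_zero_of_tendsto_of_intervalIntegrable_div_sin {u : ℝ → ℝ} {L c : ℝ} (hc : 0 < c)
    (hu : Tendsto u (𝓝[>] 0) (𝓝 L))
    (hint : IntervalIntegrable (fun x => u x / sin x) volume 0 c) : L = 0 := by
  by_contra hL
  have hbigO : deriv log =O[𝓝[>] 0] fun x => u x / sin x := by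
    refine Asymptotics.IsBigO.of_bound (2 / |L|) ?_
    filter_upwards [hu.norm.eventually (lt_mem_nhds (half_lt_self (norm_pos_iff.mpr hL))),
      Ioo_mem_nhdsGT pi_pos] with x hux hx
    have hsin : 0 < sin x := sin_pos_of_pos_of_lt_pi hx.1 hx.2
    have hsinx : sin x ≤ x := sin_le hx.1.le
    rw [deriv_log', norm_inv, norm_div, Real.norm_of_nonneg hx.1.le, Real.norm_of_nonneg hsin.le]
    rw [Real.norm_eq_abs] at hux
    calc x⁻¹ ≤ (sin x)⁻¹ := inv_anti₀ hsin hsinx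
      _ = 2 / |L| * (|L| / 2 / sin x) := by field_simp
      _ ≤ 2 / |L| * (‖u x‖ / sin x) := by gcongr
  refine not_intervalIntegrable_of_tendsto_norm_atTop_of_deriv_isBigO_filter (𝓝[>] 0) ?_ ?_
    (tendsto_abs_atBot_atTop.comp tendsto_log_nhdsGT_zero) hbigO hint
  · rw [uIcc_of_le hc.le]; exact Icc_mem_nhdsGT hc
  · filter_upwards [self_mem_nhdsWithin] with x hx using differentiableAt_log (mem_Ioi.mp hx).ne'

theorem tendsto_div_sin_nhdsGT_zero {f : ℝ → ℝ} {c : ℝ} (hc : 0 < c) (hf0 : f 0 = 0)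
    (hf : DifferentiableWithinAt ℝ f (Ioi 0) 0)
    (hint : IntervalIntegrable (fun x => f x ^ 2 / sin x ^ 3) volume 0 c) :
    Tendsto (fun x => f x / sin x) (𝓝[>] 0) (𝓝 0) := by
  have hlim := tendsto_div_sin_of_hasDerivWithinAt hf0 hf.hasDerivWithinAt
  have hsq : derivWithin f (Ioi 0) 0 ^ 2 = 0 :=
    eq_zero_of_tendsto_of_intervalIntegrable_div_sin hc (hlim.pow 2) <| by
      convert hint using 2 with x; ring
  rw [pow_eq_zero_iff two_ne_zero] at hsq
  rwa [hsq] at hlim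

theorem tendsto_div_sin_nhdsLT_pi {f : ℝ → ℝ} {c : ℝ} (hc : c < π) (hfπ : f π = 0)
    (hf : DifferentiableWithinAt ℝ f (Iio π) π)
    (hint : IntervalIntegrable (fun x => f x ^ 2 / sin x ^ 3) volume c π) :
    Tendsto (fun x => f x / sin x) (𝓝[<] π) (𝓝 0) := by
  have hreflect : Tendsto (fun x => π - x) (𝓝[<] π) (𝓝[>] 0) := by
    refine tendsto_nhdsWithin_of_tendsto_nhds_of_eventually_within _ ?_ ?_
    · exact ((continuous_sub_left π).tendsto' π 0 (sub_self π)).mono_left nhdsWithin_le_nhds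
    · filter_upwards [self_mem_nhdsWithin] with x hx using sub_pos.mpr (mem_Iio.mp hx)
  have hg : Tendsto (fun x => f (π - x) / sin x) (𝓝[>] 0) (𝓝 0) := by
    refine tendsto_div_sin_nhdsGT_zero (sub_pos.mpr hc) (by simpa using hfπ) ?_ ?_
    · refine DifferentiableWithinAt.comp (g := f) 0 (by simpa using hf) ?_ ?_
      · fun_prop
      · intro x hx; simpa using hx
    · simpa [sin_pi_sub] using (hint.comp_sub_left π).symm
  refine (hg.comp hreflect).congr fun x => ?_
  simp [sin_pi_sub]

theorem tendsto_sq_mul_cosSqDivSinCubeAntideriv {f : ℝ → ℝ} {l : Filter ℝ}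
    (hl : ∀ᶠ x in l, 0 < sin x) (hf : Tendsto (fun x => f x / sin x) l (𝓝 0)) :
    Tendsto (fun x => f x ^ 2 * cosSqDivSinCubeAntideriv x) l (𝓝 0) := by
  refine squeeze_zero_norm' ?_ (by simpa using hf.pow 2)
  filter_upwards [hl] with x hx
  have hG := abs_cosSqDivSinCubeAntideriv_le hx
  have hsum : |cos x| + sin x ≤ 2 := by linarith [abs_cos_le_one x, sin_le_one x]
  calc ‖f x ^ 2 * cosSqDivSinCubeAntideriv x‖
      = f x ^ 2 * |cosSqDivSinCubeAntideriv x| := by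
        simp only [norm_mul, norm_pow, Real.norm_eq_abs, sq_abs]
    _ ≤ f x ^ 2 * (2 / (2 * sin x ^ 2)) := by gcongr; exact hG.trans (by gcongr)
    _ = (f x / sin x) ^ 2 := by field_simp

theorem integrableOn_of_hasDerivAt_of_abs_le {φ φ' g : ℝ → ℝ} {s : Set ℝ} (hs : MeasurableSet s)
    (hφ : ∀ x ∈ s, HasDerivAt φ (φ' x) x) (hg : IntegrableOn g s) (hle : ∀ x ∈ s, |φ' x| ≤ g x) :
    IntegrableOn φ' s := by
  refine Integrable.mono' hg ((aestronglyMeasurable_deriv φ _).congr ?_) ?_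
  · filter_upwards [ae_restrict_mem hs] with x hx using (hφ x hx).deriv
  · filter_upwards [ae_restrict_mem hs] with x hx using hle x hx

theorem integral_sq_div_sin_pow_three_le {f f' : ℝ → ℝ}
    (hf : ∀ x ∈ Ioo 0 π, HasDerivAt f (f' x) x)
    (h0 : Tendsto (fun x => f x / sin x) (𝓝[>] 0) (𝓝 0))
    (hπ : Tendsto (fun x => f x / sin x) (𝓝[<] π) (𝓝 0))
    (hi3 : IntegrableOn (fun x => f x ^ 2 / sin x ^ 3) (Ioo 0 π))
    (hi1 : IntegrableOn (fun x => f x ^ 2 / sin x) (Ioo 0 π))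
    (hi1' : IntegrableOn (fun x => f' x ^ 2 / sin x) (Ioo 0 π)) :
    ∫ x in Ioo 0 π, f x ^ 2 / sin x ^ 3
      ≤ 2 * (∫ x in Ioo 0 π, f x ^ 2 / sin x) + 2 * ∫ x in Ioo 0 π, f' x ^ 2 / sin x := by
  set G := cosSqDivSinCubeAntideriv
  set Φ' := fun x => 2 * f x * f' x * G x + (f x ^ 2 / sin x ^ 3 - f x ^ 2 / sin x)
  have hsin : ∀ x ∈ Ioo 0 π, 0 < sin x := fun x hx => sin_pos_of_pos_of_lt_pi hx.1 hx.2
  have hΦ : ∀ x ∈ Ioo 0 π, HasDerivAt (fun x => f x ^ 2 * G x) (Φ' x) x := fun x hx =>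
    (((hf x hx).fun_pow 2).mul (hasDerivAt_cosSqDivSinCubeAntideriv (hsin x hx).ne')).congr_deriv
      (by simp only [Φ', G]; ring)
  have hcross : ∀ x ∈ Ioo 0 π,
      |2 * f x * f' x * G x| ≤ f x ^ 2 / sin x ^ 3 / 2 + f' x ^ 2 / sin x :=
    fun x hx => abs_two_mul_mul_mul_cosSqDivSinCubeAntideriv_le (hsin x hx) _ _
  have hΦ'_int : IntegrableOn Φ' (Ioo 0 π) := by
    refine integrableOn_of_hasDerivAt_of_abs_le measurableSet_Ioo hΦ
      ((hi3.const_mul (3 / 2)).add (hi1.add hi1')) fun x hx => ?_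
    have := hsin x hx
    have : 0 ≤ f x ^ 2 / sin x ^ 3 := by positivity
    have : 0 ≤ f x ^ 2 / sin x := by positivity
    obtain ⟨hlo, hhi⟩ := abs_le.mp (hcross x hx)
    simp only [Φ', Pi.add_apply]
    exact abs_le.mpr ⟨by linarith, by linarith⟩
  have hΦ'_zero : ∫ x in Ioo 0 π, Φ' x = 0 := by
    rw [← integral_Ioc_eq_integral_Ioo, ← intervalIntegral.integral_of_le pi_pos.le,
      intervalIntegral.integral_eq_sub_of_hasDerivAt_of_tendsto pi_pos hΦ
        ((intervalIntegrable_iff_integrableOn_Ioo_of_le pi_pos.le).mpr hΦ'_int)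
        (tendsto_sq_mul_cosSqDivSinCubeAntideriv
          (eventually_of_mem (Ioo_mem_nhdsGT pi_pos) hsin) h0)
        (tendsto_sq_mul_cosSqDivSinCubeAntideriv
          (eventually_of_mem (Ioo_mem_nhdsLT pi_pos) hsin) hπ),
      sub_self]
  calc ∫ x in Ioo 0 π, f x ^ 2 / sin x ^ 3
      ≤ ∫ x in Ioo 0 π, (2 * Φ' x + (2 * (f x ^ 2 / sin x) + 2 * (f' x ^ 2 / sin x))) := by
        refine setIntegral_mono_on hi3 ((hΦ'_int.const_mul 2).add
          ((hi1.const_mul 2).add (hi1'.const_mul 2))) measurableSet_Ioo fun x hx => ?_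
        linarith [(abs_le.mp (hcross x hx)).1]
    _ = 2 * (∫ x in Ioo 0 π, f x ^ 2 / sin x) + 2 * ∫ x in Ioo 0 π, f' x ^ 2 / sin x := by
        rw [integral_add, integral_add, integral_const_mul, integral_const_mul, integral_const_mul,
          hΦ'_zero, mul_zero, zero_add]
        exacts [hi1.const_mul 2, hi1'.const_mul 2, hΦ'_int.const_mul 2,
          (hi1.const_mul 2).add (hi1'.const_mul 2)]

/-- For `f ∈ C¹([0,π])` with `f(0) = f(π) = 0`, and all three integrals finite,
`∫_0^π f²/sin³ ≤ 3 ∫_0^π f²/sin + 2 ∫_0^π f'²/sin`. -/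
theorem weighted_sin_cubed_inequality (f : ℝ → ℝ)
    (hf : ContDiffOn ℝ 1 f (Set.Icc 0 Real.pi))
    (h0 : f 0 = 0) (hπ : f Real.pi = 0)
    (hi3 : IntegrableOn (fun θ => f θ ^ 2 / Real.sin θ ^ 3) (Set.Ioo 0 Real.pi))
    (hi1 : IntegrableOn (fun θ => f θ ^ 2 / Real.sin θ) (Set.Ioo 0 Real.pi))
    (hi1' : IntegrableOn (fun θ => (deriv f θ) ^ 2 / Real.sin θ) (Set.Ioo 0 Real.pi)) :
    (∫ θ in Set.Ioo (0 : ℝ) Real.pi, f θ ^ 2 / Real.sin θ ^ 3)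
      ≤ 3 * (∫ θ in Set.Ioo (0 : ℝ) Real.pi, f θ ^ 2 / Real.sin θ)
        + 2 * ∫ θ in Set.Ioo (0 : ℝ) Real.pi, (deriv f θ) ^ 2 / Real.sin θ := by
  have hdiff : DifferentiableOn ℝ f (Icc 0 π) := hf.differentiableOn one_ne_zero
  have hint : IntervalIntegrable (fun θ => f θ ^ 2 / sin θ ^ 3) volume 0 π :=
    (intervalIntegrable_iff_integrableOn_Ioo_of_le pi_pos.le).mpr hi3
  have hlim0 := tendsto_div_sin_nhdsGT_zero pi_pos h0
    ((hdiff 0 (left_mem_Icc.mpr pi_pos.le)).mono_of_mem_nhdsWithin (Icc_mem_nhdsGT pi_pos)) hint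
  have hlimπ := tendsto_div_sin_nhdsLT_pi pi_pos hπ
    ((hdiff π (right_mem_Icc.mpr pi_pos.le)).mono_of_mem_nhdsWithin (Icc_mem_nhdsLT pi_pos)) hint
  have hderiv : ∀ x ∈ Ioo 0 π, HasDerivAt f (deriv f x) x := fun x hx =>
    ((hdiff x (Ioo_subset_Icc_self hx)).differentiableAt (Icc_mem_nhds hx.1 hx.2)).hasDerivAt
  have hi1_nonneg : 0 ≤ ∫ θ in Ioo 0 π, f θ ^ 2 / sin θ :=
    setIntegral_nonneg measurableSet_Ioo fun x hx => by
      have := sin_pos_of_pos_of_lt_pi hx.1 hx.2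
      positivity
  linarith [integral_sq_div_sin_pow_three_le hderiv hlim0 hlimπ hi3 hi1 hi1']
end
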